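/- For every real number λ with λ > 1, one has F(5/3, 1/3, 7/3; 1/λ) − (2/3)·(λ+1)·F(2/3, 1/3, 4/3; 1/λ) = −(2/3)·λ^{2/3}·(λ−1)^{1/3}. -/

import Mathlib

/-!
Put `z = 1/λ`. Multiplied by `z`, the claim becomes the contiguous-type relation
`z F(5/3,1/3,7/3;z) - (2/3)(1+z) F(2/3,1/3,4/3;z) = -(2/3)(1-z)^{1/3}`, and
`(1-z)^{1/3} = F(-1/3,1,1;z)` by the binomial series. All three series converge for `|z| < 1`,
so the relation reduces to an identity between the coefficients of `z^{m+1}`, which is a rational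
identity in `m` once all Pochhammer symbols are expressed through `(2/3)_m` and `(1/3)_m`.
-/

open scoped BigOperators

/-- The Gauss hypergeometric series `F(a,b,c;z)`. -/
noncomputable def hypF (a b c z : ℝ) : ℝ :=
  ∑' n : ℕ,
    (Polynomial.eval a (ascPochhammer ℝ n) * Polynomial.eval b (ascPochhammer ℝ n) /
      (Polynomial.eval c (ascPochhammer ℝ n) * (n.factorial : ℝ))) * z ^ n

open Polynomial

lemma ascPochhammer_eval_add_one {K : Type*} [Field K] {x : K} (hx : x ≠ 0) (n : ℕ) :
    (ascPochhammer K n).eval (x + 1) = (ascPochhammer K n).eval x * (x + n) / x := by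
  rw [eq_div_iff hx, mul_comm]
  simpa [eval_comp] using
    congrArg (eval x) ((ascPochhammer_succ_left K n).symm.trans (ascPochhammer_succ_right K n))

lemma hypF_eq_ordinaryHypergeometric (a b c z : ℝ) : hypF a b c z = ₂F₁ a b c z := by
  rw [ordinaryHypergeometric, ordinaryHypergeometric_sum_eq, hypF]
  congr! 2 with n
  rw [smul_eq_mul]
  field_simp

lemma hasSum_hypF {a b c z : ℝ} (habc : ∀ k : ℕ, (k : ℝ) ≠ -a ∧ (k : ℝ) ≠ -b ∧ (k : ℝ) ≠ -c)
    (hz : |z| < 1) :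
    HasSum (fun n ↦ ordinaryHypergeometricCoefficient a b c n * z ^ n) (hypF a b c z) := by
  have hz' : z ∈ Metric.eball (0 : ℝ) (ordinaryHypergeometricSeries ℝ a b c).radius := by
    rw [ordinaryHypergeometricSeries_radius_eq_one ℝ a b c habc]
    simpa [enorm_eq_nnnorm, ← NNReal.coe_lt_one] using hz
  have := (ordinaryHypergeometricSeries ℝ a b c).hasSum hz'
  rw [ordinaryHypergeometricSeries_apply_eq'] at this
  rw [hypF_eq_ordinaryHypergeometric]
  exact this

lemma hasSum_one_sub_rpow (a : ℝ) {z : ℝ} (hz : |z| < 1) :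
    HasSum (fun n ↦ ordinaryHypergeometricCoefficient (-a) 1 1 n * z ^ n) ((1 - z) ^ a) := by
  have hz' : -z ∈ Metric.eball (0 : ℝ) 1 := by
    simpa [enorm_eq_nnnorm, ← NNReal.coe_lt_one] using hz
  have := (Real.one_add_rpow_hasFPowerSeriesOnBall_zero (a := a)).hasSum hz'
  rw [binomialSeries_eq_ordinaryHypergeometricSeries (b := (1 : ℝ)) (by intro k; norm_cast)] at this
  simp only [FormalMultilinearSeries.compContinuousLinearMap_apply, Function.comp_def,
    neg_apply, ContinuousLinearMap.id_apply, neg_neg,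
    ordinaryHypergeometricSeries_apply_eq, zero_sub, ← sub_eq_add_neg] at this
  exact this

lemma coeff_contiguous_relation (m : ℕ) :
    ordinaryHypergeometricCoefficient (5 / 3 : ℝ) (1 / 3) (7 / 3) m
      - 2 / 3 * ordinaryHypergeometricCoefficient (2 / 3 : ℝ) (1 / 3) (4 / 3) (m + 1)
      - 2 / 3 * ordinaryHypergeometricCoefficient (2 / 3 : ℝ) (1 / 3) (4 / 3) m
      + 2 / 3 * ordinaryHypergeometricCoefficient (-(1 / 3) : ℝ) 1 1 (m + 1) = 0 := by
  set P := (ascPochhammer ℝ m).eval (2 / 3)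
  set Q := (ascPochhammer ℝ m).eval (1 / 3)
  have e53 : (ascPochhammer ℝ m).eval (5 / 3) = P * (2 / 3 + m) * (3 / 2) := by
    rw [show (5 / 3 : ℝ) = 2 / 3 + 1 by norm_num, ascPochhammer_eval_add_one (by norm_num)]; ring
  have e43 : (ascPochhammer ℝ m).eval (4 / 3) = Q * (1 / 3 + m) * 3 := by
    rw [show (4 / 3 : ℝ) = 1 / 3 + 1 by norm_num, ascPochhammer_eval_add_one (by norm_num)]; ring
  have e73 : (ascPochhammer ℝ m).eval (7 / 3) = Q * (1 / 3 + m) * (4 / 3 + m) * (9 / 4) := by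
    rw [show (7 / 3 : ℝ) = 4 / 3 + 1 by norm_num, ascPochhammer_eval_add_one (by norm_num), e43]
    ring
  have em13 : (ascPochhammer ℝ (m + 1)).eval (-(1 / 3)) = -(1 / 3) * P := by
    rw [ascPochhammer_succ_left]; norm_num [eval_comp, P]
  have hQ : Q ≠ 0 := (ascPochhammer_pos m (1 / 3 : ℝ) (by norm_num)).ne'
  simp only [ordinaryHypergeometricCoefficient, ascPochhammer_eval_one, em13,
    ascPochhammer_succ_eval, Nat.factorial_succ, e53, e43, e73]
  push_cast
  field_simp
  ring

theorem hypF_contiguous_relation {z : ℝ} (hz : |z| < 1) :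
    z * hypF (5 / 3) (1 / 3) (7 / 3) z - 2 / 3 * (1 + z) * hypF (2 / 3) (1 / 3) (4 / 3) z
      = -(2 / 3) * (1 - z) ^ (1 / 3 : ℝ) := by
  have hparams {a b c : ℝ} (ha : 0 < a) (hb : 0 < b) (hc : 0 < c) (k : ℕ) :
      (k : ℝ) ≠ -a ∧ (k : ℝ) ≠ -b ∧ (k : ℝ) ≠ -c := by
    have := k.cast_nonneg (α := ℝ)
    refine ⟨?_, ?_, ?_⟩ <;> exact ne_of_gt (by linarith)
  have hA := hasSum_hypF (hparams (a := 5 / 3) (b := 1 / 3) (c := 7 / 3)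
    (by norm_num) (by norm_num) (by norm_num)) hz
  have hB := hasSum_hypF (hparams (a := 2 / 3) (b := 1 / 3) (c := 4 / 3)
    (by norm_num) (by norm_num) (by norm_num)) hz
  have hC := hasSum_one_sub_rpow (1 / 3) hz
  have hsum : HasSum (fun _ : ℕ ↦ (0 : ℝ)) _ :=
    ((((hA.mul_left z).sub (((hasSum_nat_add_iff' 1).2 hB).mul_left (2 / 3))).sub
      ((hB.mul_left z).mul_left (2 / 3))).add (((hasSum_nat_add_iff' 1).2 hC).mul_left (2 / 3))
      ).congr_fun fun n ↦ by linear_combination -z ^ (n + 1) * coeff_contiguous_relation n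
  have hvalue := hasSum_zero.unique hsum
  simp only [Finset.sum_range_one, pow_zero, mul_one, ordinaryHypergeometricCoefficient,
    ascPochhammer_zero, eval_one, Nat.factorial_zero, Nat.cast_one, inv_one] at hvalue
  linear_combination -hvalue

theorem stmt15 (l : ℝ) (h1 : 1 < l) :
    hypF (5 / 3) (1 / 3) (7 / 3) (1 / l)
      - (2 / 3) * (l + 1) * hypF (2 / 3) (1 / 3) (4 / 3) (1 / l)
      = -(2 / 3) * l ^ ((2 : ℝ) / 3) * (l - 1) ^ ((1 : ℝ) / 3) := by
  have hl : 0 < l := by linarith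
  have hz : |1 / l| < 1 := by
    rw [abs_of_pos (by positivity)]; exact (div_lt_one hl).2 h1
  have hrel := hypF_contiguous_relation hz
  have hroot : l * (1 - 1 / l) ^ (1 / 3 : ℝ) = l ^ ((2 : ℝ) / 3) * (l - 1) ^ ((1 : ℝ) / 3) := by
    have hl23 : l / l ^ (1 / 3 : ℝ) = l ^ ((2 : ℝ) / 3) := by
      rw [div_eq_iff (by positivity), ← Real.rpow_add hl]; norm_num
    rw [one_sub_div hl.ne', Real.div_rpow (by linarith) hl.le, mul_div_left_comm, hl23]
    ring
  calc _ = l * (1 / l * hypF (5 / 3) (1 / 3) (7 / 3) (1 / l)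
          - 2 / 3 * (1 + 1 / l) * hypF (2 / 3) (1 / 3) (4 / 3) (1 / l)) := by
        field_simp
    _ = _ := by rw [hrel]; linear_combination -(2 / 3) * hroot
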